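/- Let G be a connected unimodular locally compact group with Haar measure dg, and let φ1, φ2 : G → [0,1] be integrable functions with ‖φ1‖ + ‖φ2‖ > vol(G). Then for every real t with 0 < t < ‖φ1‖ + ‖φ2‖ − vol(G) one has ∫_G max(φ1*φ2(g) − t, 0) dg > (‖φ1‖ − t)(‖φ2‖ − t); in particular, the inequality ∫_G max(φ1*φ2 − t, 0) ≤ (‖φ1‖ − t)(‖φ2‖ − t) fails when the hypothesis ‖φ1‖ + ‖φ2‖ ≤ m(G) is violated. -/

import Mathlib

/-!
A finite Haar measure forces `G` to be compact, and on a compact group right invariance makes `μ`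
inversion invariant. Writing `c = φ1 * φ2`, Fubini gives `∫ c = ‖φ1‖ ‖φ2‖`, so
`∫ max (c - t) 0 ≥ ∫ (c - t) = ‖φ1‖ ‖φ2‖ - t vol(G)`, which exceeds `(‖φ1‖ - t)(‖φ2‖ - t)` by
`t (‖φ1‖ + ‖φ2‖ - vol(G) - t) > 0`.

Without second countability `(x, y) ↦ φ2 (y⁻¹ x)` need not be measurable for the product
σ-algebra, so Fubini is applied only to continuous `φ2`, integrating against the measure `φ1 dμ`;
for such `φ2` the convolution is continuous as well. The general case follows by approximating
`φ2` in `L¹`, using the uniform bound `|φ1 * ψ| ≤ ‖ψ‖₁`, which comes from `|φ1| ≤ 1` and the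
invariance of `μ` under `y ↦ y⁻¹ x`.
-/

open MeasureTheory

section

variable {G : Type*} [Group G] [MeasurableSpace G]

section Topological

variable [TopologicalSpace G] [IsTopologicalGroup G] [BorelSpace G] (μ : Measure G)
  [μ.IsHaarMeasure]

lemma compactSpace_of_isFiniteMeasure [LocallyCompactSpace G] [IsFiniteMeasure μ] :
    CompactSpace G := by
  by_contra h
  rw [not_compactSpace_iff] at h
  exact measure_ne_top μ _ (measure_univ_of_isMulLeftInvariant μ)

lemma isInvInvariant_of_compactSpace [CompactSpace G] [μ.IsMulRightInvariant] :
    μ.IsInvInvariant := by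
  have hinv := Measure.isMulInvariant_eq_smul_of_compactSpace μ.inv μ
  have hfactor : Measure.haarScalarFactor μ.inv μ = 1 := by
    have huniv : μ Set.univ * Measure.haarScalarFactor μ.inv μ = μ Set.univ := by
      simpa [mul_comm, Measure.inv_apply] using (congrArg (· Set.univ) hinv).symm
    exact_mod_cast (ENNReal.mul_eq_left (NeZero.ne _) (measure_ne_top μ _)).1 huniv
  exact ⟨by rw [hinv, hfactor, one_smul]⟩

end Topological

section InvMul

variable [MeasurableMul G] [MeasurableInv G] {μ : Measure G} [μ.IsMulLeftInvariant]
  [μ.IsInvInvariant] {E : Type*} [NormedAddCommGroup E]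

lemma MeasureTheory.Integrable.comp_inv_mul {f : G → E} (hf : Integrable f μ) (x : G) :
    Integrable (fun y => f (y⁻¹ * x)) μ := by
  simpa using hf.comp_inv.comp_mul_left x⁻¹

lemma integral_inv_mul_eq_self [NormedSpace ℝ E] (f : G → E) (x : G) :
    ∫ y, f (y⁻¹ * x) ∂μ = ∫ y, f y ∂μ := by
  simpa using (integral_mul_left_eq_self (fun z => f z⁻¹) x⁻¹).trans (integral_inv_eq_self f μ)

end InvMul

noncomputable def mconvolution (φ ψ : G → ℝ) (μ : Measure G) (x : G) : ℝ :=
  ∫ y, φ y * ψ (y⁻¹ * x) ∂μ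

lemma integral_withDensity_ofReal {α : Type*} [MeasurableSpace α] {ν : Measure α} {φ : α → ℝ}
    (hφ : AEMeasurable φ ν) (hφ0 : ∀ y, 0 ≤ φ y) (f : α → ℝ) :
    ∫ y, f y ∂ν.withDensity (fun y => ENNReal.ofReal (φ y)) = ∫ y, φ y * f y ∂ν := by
  rw [integral_withDensity_eq_integral_toReal_smul₀ hφ.ennreal_ofReal
    (ae_of_all _ fun _ => ENNReal.ofReal_lt_top)]
  simp only [ENNReal.toReal_ofReal (hφ0 _), smul_eq_mul]

section Convolution

variable {μ : Measure G} {φ ψ ψ' f : G → ℝ} {C : ℝ}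

lemma mconvolution_eq_integral_withDensity (hφ : AEMeasurable φ μ) (hφ0 : ∀ y, 0 ≤ φ y) :
    mconvolution φ f μ =
      fun x => ∫ y, f (y⁻¹ * x) ∂μ.withDensity (fun y => ENNReal.ofReal (φ y)) := by
  ext x
  exact (integral_withDensity_ofReal hφ hφ0 _).symm

section InvMul

variable [MeasurableMul G] [MeasurableInv G] [μ.IsMulLeftInvariant] [μ.IsInvInvariant]

lemma integrable_mul_comp_inv_mul (hφ : AEStronglyMeasurable φ μ) (hφC : ∀ y, |φ y| ≤ C)
    (hψ : Integrable ψ μ) (x : G) :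
    Integrable (fun y => φ y * ψ (y⁻¹ * x)) μ :=
  (hψ.comp_inv_mul x).bdd_mul hφ (ae_of_all _ hφC)

lemma mconvolution_sub (hφ : AEStronglyMeasurable φ μ) (hφC : ∀ y, |φ y| ≤ C)
    (hψ : Integrable ψ μ) (hψ' : Integrable ψ' μ) (x : G) :
    mconvolution φ ψ μ x - mconvolution φ ψ' μ x = mconvolution φ (ψ - ψ') μ x := by
  simp only [mconvolution, Pi.sub_apply, mul_sub]
  exact (integral_sub (integrable_mul_comp_inv_mul hφ hφC hψ x)
    (integrable_mul_comp_inv_mul hφ hφC hψ' x)).symm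

lemma abs_mconvolution_le (hφC : ∀ y, |φ y| ≤ C) (hψ : Integrable ψ μ) (x : G) :
    |mconvolution φ ψ μ x| ≤ C * ∫ y, |ψ y| ∂μ := by
  rw [← integral_inv_mul_eq_self (fun y => |ψ y|) x, ← integral_const_mul, mconvolution,
    ← Real.norm_eq_abs]
  refine norm_integral_le_of_norm_le ((hψ.comp_inv_mul x).abs.const_mul C)
    (ae_of_all _ fun y => ?_)
  rw [Real.norm_eq_abs, abs_mul]
  exact mul_le_mul_of_nonneg_right (hφC y) (abs_nonneg _)

end InvMul

variable [TopologicalSpace G] [IsTopologicalGroup G] [BorelSpace G]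

lemma continuous_mconvolution_of_hasCompactSupport [LocallyCompactSpace G]
    (hφ : Integrable φ μ) (hφ0 : ∀ y, 0 ≤ φ y) (hf : Continuous f) (hfc : HasCompactSupport f) :
    Continuous (mconvolution φ f μ) := by
  have : IsFiniteMeasure (μ.withDensity fun y => ENNReal.ofReal (φ y)) :=
    isFiniteMeasure_withDensity_ofReal hφ.2
  rw [mconvolution_eq_integral_withDensity hφ.aemeasurable hφ0]
  exact continuous_integral_apply_inv_mul hf hfc

lemma integral_mconvolution_of_continuous [CompactSpace G] [μ.IsMulLeftInvariant]
    [IsFiniteMeasureOnCompacts μ]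
    (hφ : Integrable φ μ) (hφ0 : ∀ y, 0 ≤ φ y) (hf : Continuous f) :
    ∫ x, mconvolution φ f μ x ∂μ = (∫ y, φ y ∂μ) * ∫ y, f y ∂μ := by
  have : IsFiniteMeasure (μ.withDensity fun y => ENNReal.ofReal (φ y)) :=
    isFiniteMeasure_withDensity_ofReal hφ.2
  rw [mconvolution_eq_integral_withDensity hφ.aemeasurable hφ0,
    integral_integral_swap_of_hasCompactSupport (f := fun x y => f (y⁻¹ * x))
      (hf.comp (continuous_snd.inv.mul continuous_fst)) (.of_compactSpace _)]
  simp only [integral_mul_left_eq_self f, integral_withDensity_ofReal hφ.aemeasurable hφ0,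
    integral_mul_const]

end Convolution

section Approximation

variable [TopologicalSpace G] [IsTopologicalGroup G] [BorelSpace G] {μ : Measure G}
  [μ.IsMulLeftInvariant] [μ.IsInvInvariant] {φ ψ ψ' : G → ℝ} {C : ℝ}

lemma abs_mconvolution_sub_le (hφ : AEStronglyMeasurable φ μ) (hφC : ∀ y, |φ y| ≤ C)
    (hψ : Integrable ψ μ) (hψ' : Integrable ψ' μ) (x : G) :
    |mconvolution φ ψ μ x - mconvolution φ ψ' μ x| ≤ C * ∫ y, ‖ψ y - ψ' y‖ ∂μ := by
  rw [mconvolution_sub hφ hφC hψ hψ']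
  exact abs_mconvolution_le hφC (hψ.sub hψ') x

lemma continuous_mconvolution [LocallyCompactSpace G] [NormalSpace G] [μ.Regular]
    (hφ : Integrable φ μ) (hφ0 : ∀ y, 0 ≤ φ y) (hφC : ∀ y, |φ y| ≤ C) (hψ : Integrable ψ μ) :
    Continuous (mconvolution φ ψ μ) := by
  have hC : 0 ≤ C := (abs_nonneg _).trans (hφC 1)
  refine continuous_of_uniform_approx_of_continuous fun u hu => ?_
  obtain ⟨ε, hε, hεu⟩ := Metric.mem_uniformity_dist.1 hu
  obtain ⟨f, hfc, hψf, hf, hfi⟩ :=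
    hψ.exists_hasCompactSupport_integral_sub_le (ε := ε / (C + 1)) (by positivity)
  refine ⟨_, continuous_mconvolution_of_hasCompactSupport hφ hφ0 hf hfc, fun x => hεu ?_⟩
  calc dist (mconvolution φ ψ μ x) (mconvolution φ f μ x)
      ≤ C * (ε / (C + 1)) :=
        (abs_mconvolution_sub_le hφ.1 hφC hψ hfi x).trans (mul_le_mul_of_nonneg_left hψf hC)
    _ < ε := by
        rw [mul_div_assoc', div_lt_iff₀ (by positivity)]
        linarith

lemma integral_mconvolution [CompactSpace G] [IsFiniteMeasure μ] [μ.Regular]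
    (hφ : Integrable φ μ) (hφ0 : ∀ y, 0 ≤ φ y) (hφC : ∀ y, |φ y| ≤ C) (hψ : Integrable ψ μ) :
    ∫ x, mconvolution φ ψ μ x ∂μ = (∫ y, φ y ∂μ) * ∫ y, ψ y ∂μ := by
  have hC : 0 ≤ C := (abs_nonneg _).trans (hφC 1)
  have hint : ∀ {χ}, Integrable χ μ → Integrable (mconvolution φ χ μ) μ := fun hχ =>
    (continuous_mconvolution hφ hφ0 hφC hχ).integrable_of_hasCompactSupport (.of_compactSpace _)
  set K := C * μ.real Set.univ + |∫ y, φ y ∂μ|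
  have hK : 0 ≤ K := by positivity
  refine eq_of_forall_dist_le fun ε hε => ?_
  obtain ⟨f, -, hψf, hf, hfi⟩ :=
    hψ.exists_hasCompactSupport_integral_sub_le (ε := ε / (K + 1)) (by positivity)
  have hconv : |∫ x, mconvolution φ ψ μ x ∂μ - ∫ x, mconvolution φ f μ x ∂μ|
      ≤ C * μ.real Set.univ * ∫ y, ‖ψ y - f y‖ ∂μ := by
    rw [← integral_sub (hint hψ) (hint hfi), ← Real.norm_eq_abs, mul_right_comm]
    exact norm_integral_le_of_norm_le_const
      (ae_of_all _ (abs_mconvolution_sub_le hφ.1 hφC hψ hfi))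
  have hprod : |(∫ y, φ y ∂μ) * ∫ y, f y ∂μ - (∫ y, φ y ∂μ) * ∫ y, ψ y ∂μ|
      ≤ |∫ y, φ y ∂μ| * ∫ y, ‖ψ y - f y‖ ∂μ := by
    rw [← mul_sub, abs_mul, ← integral_sub hfi hψ]
    refine mul_le_mul_of_nonneg_left ?_ (abs_nonneg _)
    simpa only [norm_sub_rev, Real.norm_eq_abs] using
      norm_integral_le_integral_norm (fun y => f y - ψ y)
  rw [integral_mconvolution_of_continuous hφ hφ0 hf] at hconv
  calc dist (∫ x, mconvolution φ ψ μ x ∂μ) ((∫ y, φ y ∂μ) * ∫ y, ψ y ∂μ)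
      ≤ K * ∫ y, ‖ψ y - f y‖ ∂μ := by
        rw [Real.dist_eq]
        linarith [abs_sub_le (∫ x, mconvolution φ ψ μ x ∂μ) ((∫ y, φ y ∂μ) * ∫ y, f y ∂μ)
          ((∫ y, φ y ∂μ) * ∫ y, ψ y ∂μ)]
    _ ≤ K * (ε / (K + 1)) := mul_le_mul_of_nonneg_left hψf hK
    _ ≤ ε := by
        rw [mul_div_assoc', div_le_iff₀ (by positivity)]
        linarith

end Approximation

end

theorem ft_convolution_counterexample_general
    {G : Type*} [Group G] [TopologicalSpace G] [IsTopologicalGroup G]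
    [LocallyCompactSpace G] [MeasurableSpace G] [BorelSpace G]
    (μ : Measure G) [μ.IsHaarMeasure] [μ.IsMulRightInvariant]
    (φ1 φ2 : G → ℝ)
    (hφ1 : ∀ g, φ1 g ∈ Set.Icc (0 : ℝ) 1)
    (hi1 : Integrable φ1 μ) (hi2 : Integrable φ2 μ)
    (hvol : μ Set.univ < ENNReal.ofReal ((∫ g, φ1 g ∂μ) + ∫ g, φ2 g ∂μ))
    (t : ℝ) (ht0 : 0 < t)
    (ht : t < (∫ g, φ1 g ∂μ) + (∫ g, φ2 g ∂μ) - (μ Set.univ).toReal) :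
    ((∫ g, φ1 g ∂μ) - t) * ((∫ g, φ2 g ∂μ) - t) <
      ∫ g, max ((∫ g', φ1 g' * φ2 (g'⁻¹ * g) ∂μ) - t) 0 ∂μ := by
  have : IsFiniteMeasure μ := ⟨hvol.trans ENNReal.ofReal_lt_top⟩
  have : CompactSpace G := compactSpace_of_isFiniteMeasure μ
  have : μ.IsInvInvariant := isInvInvariant_of_compactSpace μ
  have hφ1_nonneg : ∀ g, 0 ≤ φ1 g := fun g => (hφ1 g).1
  have hφ1_abs : ∀ g, |φ1 g| ≤ 1 := fun g =>
    (abs_of_nonneg (hφ1_nonneg g)).trans_le (hφ1 g).2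
  have hconv : Integrable (mconvolution φ1 φ2 μ) μ :=
    (continuous_mconvolution hi1 hφ1_nonneg hφ1_abs hi2).integrable_of_hasCompactSupport
      (.of_compactSpace _)
  have hconv_sub : Integrable (fun g => mconvolution φ1 φ2 μ g - t) μ :=
    hconv.sub (integrable_const t)
  have hvol_t : t * μ.real Set.univ < t * ((∫ g, φ1 g ∂μ) + (∫ g, φ2 g ∂μ) - t) :=
    mul_lt_mul_of_pos_left (by rw [measureReal_def]; linarith) ht0
  calc ((∫ g, φ1 g ∂μ) - t) * ((∫ g, φ2 g ∂μ) - t)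
      < (∫ g, φ1 g ∂μ) * (∫ g, φ2 g ∂μ) - t * μ.real Set.univ := by linarith
    _ = ∫ g, (mconvolution φ1 φ2 μ g - t) ∂μ := by
        rw [integral_sub hconv (integrable_const t), integral_const, smul_eq_mul, mul_comm t,
          integral_mconvolution hi1 hφ1_nonneg hφ1_abs hi2]
    _ ≤ ∫ g, max (mconvolution φ1 φ2 μ g - t) 0 ∂μ :=
        integral_mono hconv_sub hconv_sub.pos_part fun g => le_max_left _ _

/-- **Necessity of the assumption (Section 3).** Let `G` be a connected unimodular locally
compact group and `φ1 φ2 : G → [0,1]` integrable with `‖φ1‖ + ‖φ2‖ > vol G`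
(in particular `vol G < ∞`). Then for every `0 < t < ‖φ1‖ + ‖φ2‖ - vol G` one has
`∫ max (φ1 * φ2 - t) 0 > (‖φ1‖ - t)(‖φ2‖ - t)`; that is, the inequality of
Lemma 1.2 fails when `‖φ1‖ + ‖φ2‖ ≤ m(G)` is violated. -/
theorem ft_convolution_counterexample
    {G : Type*} [Group G] [TopologicalSpace G] [IsTopologicalGroup G]
    [LocallyCompactSpace G] [MeasurableSpace G] [BorelSpace G]
    [ConnectedSpace G]
    (μ : Measure G) [μ.IsHaarMeasure] [μ.IsMulRightInvariant]
    (φ1 φ2 : G → ℝ)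
    (hφ1 : ∀ g, φ1 g ∈ Set.Icc (0 : ℝ) 1) (hφ2 : ∀ g, φ2 g ∈ Set.Icc (0 : ℝ) 1)
    (hi1 : Integrable φ1 μ) (hi2 : Integrable φ2 μ)
    (hvol : μ Set.univ < ENNReal.ofReal ((∫ g, φ1 g ∂μ) + ∫ g, φ2 g ∂μ))
    (t : ℝ) (ht0 : 0 < t)
    (ht : t < (∫ g, φ1 g ∂μ) + (∫ g, φ2 g ∂μ) - (μ Set.univ).toReal) :
    ((∫ g, φ1 g ∂μ) - t) * ((∫ g, φ2 g ∂μ) - t) <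
      ∫ g, max ((∫ g', φ1 g' * φ2 (g'⁻¹ * g) ∂μ) - t) 0 ∂μ :=
  ft_convolution_counterexample_general μ φ1 φ2 hφ1 hi1 hi2 hvol t ht0 ht
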